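/- Let B be a left brace whose additive group is torsion-free, let a,b ∈ B with L_{a^n} = id for some positive integer n, and define e_1(a,b) = a*b, e_{k+1}(a,b) = a*e_k(a,b). Then for every positive integer k, n·e_k(a,b) = -Σ_{i=2}^n C(n,i) e_{i+k-1}(a,b). -/

import Mathlib

/-- A left brace: an abelian group `(B,+)` and a group `(B,·)` with the
compatibility law `a·(b+c) + a = a·b + a·c`. -/
class LeftBrace (B : Type*) extends AddCommGroup B, Group B where
  left_compat : ∀ a b c : B, a * (b + c) + a = a * b + a * c

variable {B : Type*} [LeftBrace B]

/-- The star operation `a * b = a·b - a - b` of a left brace. -/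
def bstar (a b : B) : B := a * b - a - b

/-- The map `L_a : b ↦ a·b - a`. -/
def lmap (a b : B) : B := a * b - a

/-- The socle of a left brace. -/
def socle (B : Type*) [LeftBrace B] : Set B := {a : B | ∀ b : B, a * b = a + b}

/-- Iterated star products: `eStar a b m = a*(a*(⋯*(a*b)))` with `a` occurring `m` times. -/
def eStar (a : B) (b : B) : ℕ → B
  | 0 => b
  | k + 1 => bstar a (eStar a b k)

/-- The additive subgroup generated by all `a*c` with `a ∈ A`, `c ∈ C`. -/
def starSub (A C : AddSubgroup B) : AddSubgroup B :=
  AddSubgroup.closure {x : B | ∃ a ∈ A, ∃ c ∈ C, x = bstar a c}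

/-- Rump's left chain: `leftPow B n = B^{n+1}`, i.e. `B^1 = B`, `B^{n+1} = B * B^n`. -/
def leftPow (B : Type*) [LeftBrace B] : ℕ → AddSubgroup B
  | 0 => ⊤
  | n + 1 => starSub ⊤ (leftPow B n)

/-- Rump's right chain: `rightPow B n = B^{(n+1)}`, i.e. `B^{(1)} = B`, `B^{(n+1)} = B^{(n)} * B`. -/
def rightPow (B : Type*) [LeftBrace B] : ℕ → AddSubgroup B
  | 0 => ⊤
  | n + 1 => starSub (rightPow B n) ⊤

/-- The commutator `[g,h] = g⁻¹h⁻¹gh`. -/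
def pcomm {G : Type*} [Group G] (g h : G) : G := g⁻¹ * h⁻¹ * g * h

/-- Iterated commutator `engel g h n = [[…[[g,h],h]…],h]` with `h` occurring `n` times. -/
def engel {G : Type*} [Group G] (g h : G) : ℕ → G
  | 0 => g
  | k + 1 => pcomm (engel g h k) h

/-- A group is Engel if every iterated commutator eventually vanishes. -/
def IsEngelGroup (G : Type*) [Group G] : Prop :=
  ∀ g h : G, ∃ n : ℕ, 0 < n ∧ engel g h n = 1

/-!
The maps `L_x` are additive and `x ↦ L_x` is a homomorphism from the multiplicative group of `B`
to `End(B,+)`, so with `T = L_a - 1` we have `e_k(a,b) = T^k b` and `(1 + T)^n = L_{a^n} = 1`.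
Expanding `(1 + T)^n` binomially, cancelling the constant term and multiplying by `T^(k-1)` gives
`∑_{i=1}^n C(n,i) T^(i+k-1) = 0`, whose `i = 1` term is `n T^k`.
-/
open Finset

section Ring

variable {R : Type*} [Ring R] {T : R} {n : ℕ}

theorem sum_Icc_one_choose_smul_pow_eq_zero (h : (1 + T) ^ n = 1) :
    ∑ i ∈ Icc 1 n, n.choose i • T ^ i = 0 := by
  have hexp : (1 + T) ^ n = ∑ i ∈ range (n + 1), n.choose i • T ^ i := by
    rw [add_comm, (Commute.one_right T).add_pow]
    simp [nsmul_eq_mul, Nat.cast_comm]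
  rw [h, range_eq_Ico, sum_eq_sum_Ico_succ_bot n.succ_pos, zero_add,
    Nat.succ_eq_add_one, Ico_add_one_right_eq_Icc] at hexp
  simpa using hexp

theorem nsmul_pow_eq_neg_sum_choose_smul_pow (h : (1 + T) ^ n = 1) {k : ℕ} (hk : 1 ≤ k) :
    n • T ^ k = -∑ i ∈ Icc 2 n, n.choose i • T ^ (i + k - 1) := by
  rcases n.eq_zero_or_pos with rfl | hn
  · simp
  have hsum := congrArg (· * T ^ (k - 1)) (sum_Icc_one_choose_smul_pow_eq_zero h)
  simp only [sum_mul, smul_mul_assoc, ← pow_add, zero_mul] at hsum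
  rw [Icc_eq_cons_Ioc hn, sum_cons, ← Icc_add_one_left_eq_Ioc] at hsum
  rw [eq_neg_iff_add_eq_zero, ← hsum, Nat.choose_one_right, Nat.add_sub_cancel' hk]
  congr 1
  refine sum_congr rfl fun i _ => ?_
  rw [Nat.add_sub_assoc hk]

end Ring

namespace LeftBrace

theorem mul_zero_eq_self (a : B) : a * 0 = a := by
  simpa using LeftBrace.left_compat a 0 0

theorem one_eq_zero : (1 : B) = 0 := by
  simpa using (mul_zero_eq_self (1 : B)).symm

theorem lmap_add (a b c : B) : lmap a (b + c) = lmap a b + lmap a c := by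
  simp only [lmap]
  linear_combination (norm := abel) LeftBrace.left_compat a b c

def lmapEnd (a : B) : AddMonoid.End B := AddMonoidHom.mk' (lmap a) (lmap_add a)

theorem lmapEnd_apply (a c : B) : lmapEnd a c = a * c - a := rfl

def lmapHom : B →* AddMonoid.End B where
  toFun := lmapEnd
  map_one' := by
    ext c
    rw [AddMonoid.End.coe_one, id, lmapEnd_apply, one_mul, one_eq_zero, sub_zero]
  map_mul' x y := by
    ext c
    have h := map_sub (lmapEnd x) (y * c) y
    simp only [lmapEnd_apply] at h
    simp only [AddMonoid.End.coe_mul, Function.comp_apply, lmapEnd_apply, mul_assoc, h]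
    abel

theorem eStar_eq_pow_smul (a b : B) (k : ℕ) : eStar a b k = (lmapHom a - 1) ^ k • b := by
  induction k with
  | zero => rfl
  | succ k ih =>
    rw [eStar, ih, pow_succ']
    rfl

end LeftBrace

theorem stmt19_general {B : Type*} [LeftBrace B]
    (a b : B) (n : ℕ) (hL : ∀ c : B, lmap (a ^ n) c = c) :
    ∀ k : ℕ, 1 ≤ k →
      n • eStar a b k = -∑ i ∈ Finset.Icc 2 n, (n.choose i) • eStar a b (i + k - 1) := by
  have hT : (1 + (LeftBrace.lmapHom a - 1)) ^ n = 1 := by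
    rw [add_sub_cancel, ← map_pow]
    ext c
    exact hL c
  intro k hk
  have h := congrArg (· • b) (nsmul_pow_eq_neg_sum_choose_smul_pow hT hk)
  simpa only [neg_smul, sum_smul, smul_assoc, ← LeftBrace.eStar_eq_pow_smul] using h

theorem stmt19 {B : Type*} [LeftBrace B]
    (htf : ∀ (x : B) (k : ℕ), 0 < k → k • x = 0 → x = 0)
    (a b : B) (n : ℕ) (hn : 0 < n) (hL : ∀ c : B, lmap (a ^ n) c = c) :
    ∀ k : ℕ, 1 ≤ k →
      n • eStar a b k = -∑ i ∈ Finset.Icc 2 n, (n.choose i) • eStar a b (i + k - 1) :=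
  stmt19_general a b n hL
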